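/- In the extra-special setting (Δ⁺ = Δ(0)⁺ ⊔ Δ(1) ⊔ {θ} where Δ(i) = {γ ∈ Δ⁺ : (γ, θ∨) = i}), let I ⊆ Δ(1) be an upper ideal with respect to the order where γ covers μ iff γ − μ ∈ Π(0). If there exist γ₁, γ₂ ∈ I with γ₁ + γ₂ = θ, then there is no pair μ₁, μ₂ ∈ Δ(1) \ I with μ₁ + μ₂ = θ. -/

import Mathlib

variable {V : Type*} [NormedAddCommGroup V] [InnerProductSpace ℝ V]

/-- Data of a reduced crystallographic root system `Δ` in a Euclidean space, together with a
choice of positive system `Δ⁺` and the corresponding simple roots `Π`. -/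
structure RootSystemData (V : Type*) [NormedAddCommGroup V] [InnerProductSpace ℝ V] where
  roots : Finset V
  pos : Finset V
  simples : Finset V
  zero_not_mem : (0 : V) ∉ roots
  neg_mem : ∀ γ ∈ roots, -γ ∈ roots
  reduced : ∀ γ ∈ roots, ∀ c : ℝ, c • γ ∈ roots → c = 1 ∨ c = -1
  crystallographic : ∀ γ ∈ roots, ∀ δ ∈ roots,
    ∃ n : ℤ, 2 * (inner ℝ γ δ : ℝ) / (inner ℝ δ δ : ℝ) = (n : ℝ)
  reflect_mem : ∀ γ ∈ roots, ∀ δ ∈ roots,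
    γ - (2 * (inner ℝ γ δ : ℝ) / (inner ℝ δ δ : ℝ)) • δ ∈ roots
  pos_subset : pos ⊆ roots
  pos_or_neg : ∀ γ ∈ roots, γ ∈ pos ∨ -γ ∈ pos
  pos_neg_disjoint : ∀ γ ∈ pos, -γ ∉ pos
  simples_subset : simples ⊆ pos
  simples_indep : LinearIndependent ℝ (fun α : {x // x ∈ simples} => (α : V))
  pos_combo : ∀ γ ∈ pos, ∃ c : V → ℕ, γ = ∑ α ∈ simples, (c α : ℝ) • α

/-- Irreducibility: the roots admit no partition into two nonempty mutually orthogonal parts. -/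
def RootSystemData.Irreducible (R : RootSystemData V) : Prop :=
  ∀ A B : Set V, A ∪ B = ↑R.roots → Disjoint A B →
    (∀ a ∈ A, ∀ b ∈ B, (inner ℝ a b : ℝ) = 0) → A = ∅ ∨ B = ∅

/-- The reflection in the hyperplane orthogonal to `δ`. -/
noncomputable def reflAt (δ : V) : Function.End V :=
  fun x => x - (2 * (inner ℝ x δ : ℝ) / (inner ℝ δ δ : ℝ)) • δ

/-- The Weyl group, generated by the reflections in the roots (each reflection is an
involution, so the closure as a monoid of endomorphisms coincides with the generated group). -/
def weylGroup (R : RootSystemData V) : Submonoid (Function.End V) :=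
  Submonoid.closure {f | ∃ δ ∈ R.roots, f = reflAt δ}

/-- The inversion set `N(w) = {γ ∈ Δ⁺ : w(γ) < 0}`. -/
def invSet (R : RootSystemData V) (w : Function.End V) : Set V :=
  {γ | γ ∈ R.pos ∧ -(w γ) ∈ R.pos}

/-- The pairing `(γ, θ∨) = 2(γ,θ)/(θ,θ)`. -/
noncomputable def copair (θ γ : V) : ℝ := 2 * (inner ℝ γ θ : ℝ) / (inner ℝ θ θ : ℝ)

/-- `μ ≤ γ` iff `γ − μ` is a nonnegative integer combination of the simple roots lying in
the subset `Z`. -/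
def rootLEon (simples : Finset V) (Z : Set V) (μ γ : V) : Prop :=
  ∃ c : V → ℕ, (∀ α, α ∉ Z → c α = 0) ∧ γ = μ + ∑ α ∈ simples, (c α : ℝ) • α

/-- `Δ(1) = {γ ∈ Δ⁺ : (γ, θ∨) = 1}`, the positive roots at level one. -/
noncomputable def levelOnePos (R : RootSystemData V) (θ : V) : Set V :=
  {γ | γ ∈ R.pos ∧ copair θ γ = 1}

/-!
Write `γ₁ + γ₂ = θ = μ₁ + μ₂` with `γᵢ ∈ I` and `μⱼ ∈ Δ(1) \ I`. Since `(θ, θ) > 0`, some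
`(γᵢ, μⱼ)` is positive, so `δ = γᵢ - μⱼ` is a root, of level `0`. If `δ > 0` then the partner
`μ` of `μⱼ` is `γ + δ` for the partner `γ` of `γᵢ`; if `δ < 0` then `μⱼ = γᵢ - δ`. A positive
level-zero root is supported on `Π(0)` because every simple root has nonnegative level, so
either way an element of `Δ(1) \ I` lies above an element of `I`.
-/

open scoped RealInnerProductSpace

namespace RootSystemData

variable (R : RootSystemData V)

lemma ne_zero_of_mem_roots {γ : V} (hγ : γ ∈ R.roots) : γ ≠ 0 :=
  fun h => R.zero_not_mem (h ▸ hγ)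

lemma inner_lt_norm_mul_norm_of_mem_roots {α β : V} (hα : α ∈ R.roots) (hβ : β ∈ R.roots)
    (hpos : 0 < ⟪α, β⟫) (hne : α ≠ β) : ⟪α, β⟫ < ‖α‖ * ‖β‖ := by
  refine lt_of_le_of_ne (real_inner_le_norm α β) fun heq => hne ?_
  have hnorm : ‖α‖ * ‖β‖ ≠ 0 := by rw [← heq]; exact hpos.ne'
  obtain ⟨-, r, hr, rfl⟩ :=
    (real_inner_div_norm_mul_norm_eq_one_iff α β).1 (by rw [heq, div_self hnorm])
  rcases R.reduced α hα r hβ with rfl | rfl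
  · rw [one_smul]
  · norm_num at hr

/-- The two Cartan integers are positive and their product is `4 cos² ∠(α, β) < 4`. -/
lemma cartan_eq_one_of_inner_pos {α β : V} (hα : α ∈ R.roots) (hβ : β ∈ R.roots)
    (hpos : 0 < ⟪α, β⟫) (hne : α ≠ β) :
    2 * ⟪α, β⟫ / ⟪β, β⟫ = 1 ∨ 2 * ⟪β, α⟫ / ⟪α, α⟫ = 1 := by
  have hαα : 0 < ⟪α, α⟫ := real_inner_self_pos.2 (R.ne_zero_of_mem_roots hα)
  have hββ : 0 < ⟪β, β⟫ := real_inner_self_pos.2 (R.ne_zero_of_mem_roots hβ)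
  obtain ⟨n, hn⟩ := R.crystallographic α hα β hβ
  obtain ⟨m, hm⟩ := R.crystallographic β hβ α hα
  rw [real_inner_comm α β] at hm ⊢
  rw [hn, hm]
  have hn_pos : (0 : ℝ) < n := by rw [← hn]; positivity
  have hm_pos : (0 : ℝ) < m := by rw [← hm]; positivity
  have hnm : (n : ℝ) * m < 4 := by
    have hcs : ⟪α, β⟫ * ⟪α, β⟫ < ⟪α, α⟫ * ⟪β, β⟫ := by
      rw [real_inner_self_eq_norm_mul_norm, real_inner_self_eq_norm_mul_norm]
      nlinarith [R.inner_lt_norm_mul_norm_of_mem_roots hα hβ hpos hne]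
    rw [← hn, ← hm, div_mul_div_comm, div_lt_iff₀ (by positivity)]
    nlinarith
  have : n = 1 ∨ m = 1 := by
    have h1 : (0 : ℤ) < n := by exact_mod_cast hn_pos
    have h2 : (0 : ℤ) < m := by exact_mod_cast hm_pos
    have h3 : n * m < 4 := by exact_mod_cast hnm
    by_contra! h
    have hn2 : 2 ≤ n := by omega
    have hm2 : 2 ≤ m := by omega
    nlinarith
  rcases this with rfl | rfl <;> simp

lemma sub_mem_roots_of_inner_pos {α β : V} (hα : α ∈ R.roots) (hβ : β ∈ R.roots)
    (hpos : 0 < ⟪α, β⟫) (hne : α ≠ β) : α - β ∈ R.roots := by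
  rcases R.cartan_eq_one_of_inner_pos hα hβ hpos hne with h | h
  · simpa only [h, one_smul] using R.reflect_mem α hα β hβ
  · simpa only [h, one_smul, neg_sub] using R.neg_mem _ (R.reflect_mem β hβ α hα)

end RootSystemData

lemma copair_sub (θ x y : V) : copair θ (x - y) = copair θ x - copair θ y := by
  simp only [copair, inner_sub_left]
  ring

lemma copair_sum_smul (θ : V) (s : Finset V) (c : V → ℕ) :
    copair θ (∑ α ∈ s, (c α : ℝ) • α) = ∑ α ∈ s, (c α : ℝ) * copair θ α := by
  simp only [copair, sum_inner, real_inner_smul_left, Finset.sum_div, Finset.mul_sum]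
  exact Finset.sum_congr rfl fun α _ => by ring

lemma copair_self {θ : V} (hθ : θ ≠ 0) : copair θ θ = 2 := by
  have : ⟪θ, θ⟫ ≠ 0 := (real_inner_self_pos.2 hθ).ne'
  rw [copair, mul_div_assoc, div_self this, mul_one]

/-- `copair 0 γ = 0` by the convention `x / 0 = 0`. -/
lemma ne_zero_of_copair_ne_zero {θ γ : V} (h : copair θ γ ≠ 0) : θ ≠ 0 := by
  rintro rfl
  simp [copair] at h

lemma rootLEon_add_of_copair_eq_zero (R : RootSystemData V) {θ δ : V}
    (hsimple : ∀ α ∈ R.simples, 0 ≤ copair θ α) (hδ : δ ∈ R.pos) (hδ0 : copair θ δ = 0)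
    (x : V) : rootLEon R.simples {α | copair θ α = 0} x (x + δ) := by
  classical
  obtain ⟨c, hc⟩ := R.pos_combo δ hδ
  have hterm : ∀ α ∈ R.simples, (c α : ℝ) * copair θ α = 0 := by
    refine (Finset.sum_eq_zero_iff_of_nonneg fun α hα => ?_).1 ?_
    · exact mul_nonneg (Nat.cast_nonneg _) (hsimple α hα)
    · rw [← copair_sum_smul, ← hc, hδ0]
  refine ⟨fun α => if copair θ α = 0 then c α else 0, fun α hα => if_neg hα, ?_⟩
  rw [hc]
  congr 1
  refine Finset.sum_congr rfl fun α hα => ?_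
  dsimp only
  split_ifs with h0
  · rfl
  · simp [(mul_eq_zero.1 (hterm α hα)).resolve_right h0]

lemma copair_nonneg_of_mem_simples (R : RootSystemData V) {θ : V} (hθ : θ ≠ 0)
    (hextra : ∀ γ ∈ R.pos, copair θ γ = 0 ∨ copair θ γ = 1 ∨ γ = θ) :
    ∀ α ∈ R.simples, 0 ≤ copair θ α := by
  intro α hα
  rcases hextra α (R.simples_subset hα) with h | h | rfl
  · exact h.ge
  · rw [h]; exact zero_le_one
  · rw [copair_self hθ]; exact zero_le_two

lemma exists_inner_pos_of_inner_add_pos {γ₁ γ₂ μ₁ μ₂ : V} (h : 0 < ⟪γ₁ + γ₂, μ₁ + μ₂⟫) :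
    0 < ⟪γ₁, μ₁⟫ ∨ 0 < ⟪γ₁, μ₂⟫ ∨ 0 < ⟪γ₂, μ₁⟫ ∨ 0 < ⟪γ₂, μ₂⟫ := by
  simp only [inner_add_left, inner_add_right] at h
  by_contra! hle
  linarith [hle.1, hle.2.1, hle.2.2.1, hle.2.2.2]

lemma inner_nonpos_of_add_eq_add {R : RootSystemData V} {θ : V} {I : Set V}
    (hsimple : ∀ α ∈ R.simples, 0 ≤ copair θ α) (hIsub : I ⊆ levelOnePos R θ)
    (hup : ∀ μ ∈ I, ∀ γ ∈ levelOnePos R θ,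
        rootLEon R.simples {α | copair θ α = 0} μ γ → γ ∈ I)
    ⦃γ γ' μ μ' : V⦄ (hγ : γ ∈ I) (hγ' : γ' ∈ I)
    (hμ : μ ∈ levelOnePos R θ \ I) (hμ' : μ' ∈ levelOnePos R θ \ I)
    (hsum : γ + γ' = μ + μ') : ⟪γ, μ⟫ ≤ 0 := by
  by_contra! hpos
  have hγL := hIsub hγ
  have hδ : γ - μ ∈ R.roots := R.sub_mem_roots_of_inner_pos (R.pos_subset hγL.1)
    (R.pos_subset hμ.1.1) hpos fun h => hμ.2 (h ▸ hγ)
  have hδ0 : copair θ (γ - μ) = 0 := by rw [copair_sub, hγL.2, hμ.1.2, sub_self]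
  have hδ0' : copair θ (μ - γ) = 0 := by rw [copair_sub, hγL.2, hμ.1.2, sub_self]
  rcases R.pos_or_neg _ hδ with hδpos | hδneg
  · have hle := rootLEon_add_of_copair_eq_zero R hsimple hδpos hδ0 γ'
    rw [show γ' + (γ - μ) = μ' by linear_combination (norm := module) hsum] at hle
    exact hμ'.2 (hup γ' hγ' μ' hμ'.1 hle)
  · rw [neg_sub] at hδneg
    have hle := rootLEon_add_of_copair_eq_zero R hsimple hδneg hδ0' γ
    rw [add_sub_cancel] at hle
    exact hμ.2 (hup γ hγ μ hμ.1 hle)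

theorem extraSpecial_no_complementary_pair_general (R : RootSystemData V)
    (θ : V)
    (hextra : ∀ γ ∈ R.pos, copair θ γ = 0 ∨ copair θ γ = 1 ∨ γ = θ)
    (I : Set V) (hIsub : I ⊆ levelOnePos R θ)
    (hup : ∀ μ ∈ I, ∀ γ ∈ levelOnePos R θ,
        rootLEon R.simples {α | copair θ α = 0} μ γ → γ ∈ I)
    (γ₁ : V) (h1 : γ₁ ∈ I) (γ₂ : V) (h2 : γ₂ ∈ I) (hsum : γ₁ + γ₂ = θ) :
    ¬ ∃ μ₁ ∈ levelOnePos R θ \ I, ∃ μ₂ ∈ levelOnePos R θ \ I, μ₁ + μ₂ = θ := by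
  rintro ⟨μ₁, hμ₁, μ₂, hμ₂, hsum'⟩
  have hθ : θ ≠ 0 := ne_zero_of_copair_ne_zero (hμ₁.1.2.symm ▸ one_ne_zero)
  have hsimple := copair_nonneg_of_mem_simples R hθ hextra
  have hkey := inner_nonpos_of_add_eq_add hsimple hIsub hup
  have hθθ : 0 < ⟪γ₁ + γ₂, μ₁ + μ₂⟫ := by rw [hsum, hsum']; exact real_inner_self_pos.2 hθ
  have h21 : γ₂ + γ₁ = θ := by rw [add_comm, hsum]
  have h21' : μ₂ + μ₁ = θ := by rw [add_comm, hsum']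
  rcases exists_inner_pos_of_inner_add_pos hθθ with h | h | h | h
  · exact (hkey h1 h2 hμ₁ hμ₂ (hsum.trans hsum'.symm)).not_gt h
  · exact (hkey h1 h2 hμ₂ hμ₁ (hsum.trans h21'.symm)).not_gt h
  · exact (hkey h2 h1 hμ₁ hμ₂ (h21.trans hsum'.symm)).not_gt h
  · exact (hkey h2 h1 hμ₂ hμ₁ (h21.trans h21'.symm)).not_gt h

/-- Extra-special setting (`Δ⁺ = Δ(0)⁺ ⊔ Δ(1) ⊔ {θ}`): if `I ⊆ Δ(1)` is an upper ideal
(for the order generated by adding simple roots from `Π(0)`) containing a pair summing to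
`θ`, then no pair in `Δ(1) \ I` sums to `θ`. -/
theorem extraSpecial_no_complementary_pair (R : RootSystemData V)
    (θ : V) (hθ : θ ∈ R.pos)
    (hhigh : ∀ γ ∈ R.pos, ∃ c : V → ℕ, θ = γ + ∑ α ∈ R.simples, (c α : ℝ) • α)
    (hextra : ∀ γ ∈ R.pos, copair θ γ = 0 ∨ copair θ γ = 1 ∨ γ = θ)
    (I : Set V) (hIsub : I ⊆ levelOnePos R θ)
    (hup : ∀ μ ∈ I, ∀ γ ∈ levelOnePos R θ,
        rootLEon R.simples {α | copair θ α = 0} μ γ → γ ∈ I)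
    (γ₁ : V) (h1 : γ₁ ∈ I) (γ₂ : V) (h2 : γ₂ ∈ I) (hsum : γ₁ + γ₂ = θ) :
    ¬ ∃ μ₁ ∈ levelOnePos R θ \ I, ∃ μ₂ ∈ levelOnePos R θ \ I, μ₁ + μ₂ = θ :=
  extraSpecial_no_complementary_pair_general R θ hextra I hIsub hup γ₁ h1 γ₂ h2 hsum
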